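/- arXiv:2310.19911 — 8 statements merged into one kernel-verified Lean document; each statement's English description precedes it below -/
import Mathlib

section
/- Let s < r < t be real numbers and let α > 0. Then for every u ∈ H one has ‖(1+P)^r u‖ ≤ α·‖(1+P)^t u‖ + α^((s−r)/(t−r))·‖(1+P)^s u‖, where for a real exponent a the operator (1+P)^a is obtained by applying the continuous functional calculus of the self-adjoint operator P to the function x ↦ (1+x)^a (well defined since P is nonnegative). -/
/-!
For `y > 0` the scalar inequality `y ^ r ≤ α y ^ t + α ^ ((s - r) / (t - r)) y ^ s` holds: if
`α y ^ (t - r) ≥ 1` the first term alone dominates, otherwise `y ^ (r - s) ≤ α ^ ((s - r) / (t - r))`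
and the second does. Since `P ≥ 0`, its spectrum lies in `[0, ∞)`, so this applies to `y = 1 + x`
for every spectral value `x`. Squaring and using monotonicity of the functional calculus gives
`(1 + P) ^ (2r) ≤ (α (1 + P) ^ t + α ^ ((s - r) / (t - r)) (1 + P) ^ s) ^ 2`, which compares the
norms of the two operators applied to `u`; the triangle inequality finishes.
-/

open ContinuousLinearMap

theorem ContinuousLinearMap.norm_apply_le_of_star_mul_self_le
    {𝕜 E : Type*} [RCLike 𝕜] [NormedAddCommGroup E] [InnerProductSpace 𝕜 E] [CompleteSpace E]
    {C D : E →L[𝕜] E} (h : star C * C ≤ star D * D) (u : E) : ‖C u‖ ≤ ‖D u‖ := by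
  have hsq : ‖C u‖ ^ 2 ≤ ‖D u‖ ^ 2 := by
    rw [apply_norm_sq_eq_inner_adjoint_left, apply_norm_sq_eq_inner_adjoint_left,
      ← star_eq_adjoint, ← star_eq_adjoint]
    simpa [inner_sub_left] using h.re_inner_nonneg_left u
  exact pow_le_pow_iff_left₀ (norm_nonneg _) (norm_nonneg _) two_ne_zero |>.mp hsq

theorem ContinuousLinearMap.norm_cfc_apply_le_of_abs_le
    {H : Type*} [NormedAddCommGroup H] [InnerProductSpace ℂ H] [CompleteSpace H]
    {a : H →L[ℂ] H} {f g : ℝ → ℝ} (hfg : ∀ x ∈ spectrum ℝ a, |f x| ≤ |g x|)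
    (hf : ContinuousOn f (spectrum ℝ a)) (hg : ContinuousOn g (spectrum ℝ a)) (u : H) :
    ‖cfc f a u‖ ≤ ‖cfc g a u‖ := by
  refine norm_apply_le_of_star_mul_self_le ?_ u
  rw [(cfc_predicate f a).star_eq, (cfc_predicate g a).star_eq, ← cfc_mul f f a, ← cfc_mul g g a]
  exact cfc_mono fun x hx ↦ abs_le_iff_mul_self_le.mp (hfg x hx)

theorem Real.rpow_le_mul_rpow_add_rpow_mul_rpow {s r t α y : ℝ} (hsr : s < r) (hrt : r < t)
    (hα : 0 < α) (hy : 0 < y) :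
    y ^ r ≤ α * y ^ t + α ^ ((s - r) / (t - r)) * y ^ s := by
  have hys : 0 ≤ α ^ ((s - r) / (t - r)) * y ^ s := by positivity
  have hyt : 0 ≤ α * y ^ t := by positivity
  rcases le_or_gt α⁻¹ (y ^ (t - r)) with h | h
  · have : y ^ r ≤ α * y ^ t := calc
      y ^ r = α * (α⁻¹ * y ^ r) := by field_simp
      _ ≤ α * (y ^ (t - r) * y ^ r) := by gcongr
      _ = α * y ^ t := by rw [← Real.rpow_add hy]; ring_nf
    linarith
  · have : y ^ r ≤ α ^ ((s - r) / (t - r)) * y ^ s := calc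
      y ^ r = (y ^ (t - r)) ^ ((r - s) / (t - r)) * y ^ s := by
        rw [← Real.rpow_mul hy.le, ← Real.rpow_add hy]
        congr 1
        field_simp [(sub_pos.mpr hrt).ne']
        ring
      _ ≤ (α⁻¹) ^ ((r - s) / (t - r)) * y ^ s := by gcongr
      _ = α ^ ((s - r) / (t - r)) * y ^ s := by
        rw [Real.inv_rpow hα.le, ← Real.rpow_neg hα.le, ← neg_div, neg_sub]
    linarith

/-- Interpolation inequality (Lemma 3.1, bounded-operator form):
for `s < r < t` and `α > 0`, `‖(1+P)^r u‖ ≤ α‖(1+P)^t u‖ + α^((s-r)/(t-r))‖(1+P)^s u‖`,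
where `(1+P)^a` is defined by the continuous functional calculus of the nonnegative
self-adjoint bounded operator `P`. -/
theorem interpolation_inequality
    {H : Type*} [NormedAddCommGroup H] [InnerProductSpace ℂ H] [CompleteSpace H]
    (P : H →L[ℂ] H) (hP : IsSelfAdjoint P)
    (hPnn : ∀ u : H, 0 ≤ (inner ℂ (P u) u : ℂ).re)
    (s r t : ℝ) (hsr : s < r) (hrt : r < t)
    (α : ℝ) (hα : 0 < α) (u : H) :
    ‖cfc (fun x : ℝ => (1 + x) ^ r) P u‖ ≤
      α * ‖cfc (fun x : ℝ => (1 + x) ^ t) P u‖ +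
        α ^ ((s - r) / (t - r)) * ‖cfc (fun x : ℝ => (1 + x) ^ s) P u‖ := by
  have hP0 : 0 ≤ P := (nonneg_iff_isPositive P).mpr (isPositive_def'.mpr ⟨hP, hPnn⟩)
  have hpos (x : ℝ) (hx : x ∈ spectrum ℝ P) : 0 < 1 + x := by
    linarith [spectrum_nonneg_of_nonneg hP0 hx]
  have hcont (a : ℝ) : ContinuousOn (fun x : ℝ => (1 + x) ^ a) (spectrum ℝ P) := fun x hx ↦
    (continuousAt_const.add continuousAt_id).rpow_const (.inl (hpos x hx).ne') |>.continuousWithinAt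
  set β := α ^ ((s - r) / (t - r))
  calc ‖cfc (fun x : ℝ => (1 + x) ^ r) P u‖
      ≤ ‖cfc (fun x : ℝ => α * (1 + x) ^ t + β * (1 + x) ^ s) P u‖ := by
        refine norm_cfc_apply_le_of_abs_le (fun x hx ↦ ?_) (hcont r)
          (((hcont t).const_smul α).add ((hcont s).const_smul β)) u
        have hx1 := hpos x hx
        exact abs_le_abs_of_nonneg (by positivity)
          (Real.rpow_le_mul_rpow_add_rpow_mul_rpow hsr hrt hα hx1)
    _ = ‖α • cfc (fun x : ℝ => (1 + x) ^ t) P u + β • cfc (fun x : ℝ => (1 + x) ^ s) P u‖ := by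
        rw [cfc_add P (fun x ↦ α * (1 + x) ^ t) (fun x ↦ β * (1 + x) ^ s),
          cfc_const_mul α _ P (hcont t), cfc_const_mul β _ P (hcont s)]
        rfl
    _ ≤ α * ‖cfc (fun x : ℝ => (1 + x) ^ t) P u‖ + β * ‖cfc (fun x : ℝ => (1 + x) ^ s) P u‖ := by
        refine (norm_add_le _ _).trans_eq ?_
        rw [norm_smul, norm_smul, Real.norm_of_nonneg hα.le, Real.norm_of_nonneg (by positivity)]
end

section
/- Let λ be a nonzero real number. If u ∈ H satisfies Pu − iλ·Q*(Qu) − λ²u = 0, then Pu = λ²u and Qu = 0. -/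
open ContinuousLinearMap Complex

section

variable {H Y : Type*} [NormedAddCommGroup H] [InnerProductSpace ℂ H] [CompleteSpace H]
  [NormedAddCommGroup Y] [InnerProductSpace ℂ Y] [CompleteSpace Y]

/-- Pairing with `u` turns the pencil into `⟪u, P u⟫ - i λ ‖Q u‖² - μ ‖u‖²`, whose only
non-real term is the damping one. -/
theorem im_inner_self_pencil_apply {P : H →L[ℂ] H} (hP : IsSelfAdjoint P) (Q : H →L[ℂ] Y)
    (lam μ : ℝ) (u : H) :
    (inner ℂ u (P u - (I * lam) • adjoint Q (Q u) - (μ : ℂ) • u)).im = -(lam * ‖Q u‖ ^ 2) := by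
  rw [inner_sub_right, inner_sub_right, inner_smul_right, inner_smul_right, adjoint_inner_right,
    inner_self_eq_norm_sq_to_K, inner_self_eq_norm_sq_to_K]
  have hPu : (inner ℂ u (P u)).im = 0 := hP.isSymmetric.im_inner_self_apply u
  simp [hPu, ← ofReal_pow]

theorem apply_eq_zero_of_pencil_apply_eq_zero {P : H →L[ℂ] H} (hP : IsSelfAdjoint P)
    (Q : H →L[ℂ] Y) {lam μ : ℝ} (hlam : lam ≠ 0) {u : H}
    (hu : P u - (I * lam) • adjoint Q (Q u) - (μ : ℂ) • u = 0) : Q u = 0 := by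
  have him := im_inner_self_pencil_apply hP Q lam μ u
  rw [hu, inner_zero_right, zero_im, eq_comm, neg_eq_zero] at him
  simpa [hlam] using him

end

theorem pencil_kernel_split_general
    {H Y : Type*} [NormedAddCommGroup H] [InnerProductSpace ℂ H] [CompleteSpace H]
    [NormedAddCommGroup Y] [InnerProductSpace ℂ Y] [CompleteSpace Y]
    (P : H →L[ℂ] H) (hP : IsSelfAdjoint P)
    (Q : H →L[ℂ] Y)
    (lam : ℝ) (hlam : lam ≠ 0) (u : H)
    (hu : P u - (Complex.I * (lam : ℂ)) • (ContinuousLinearMap.adjoint Q) (Q u)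
        - ((lam : ℂ) ^ 2) • u = 0) :
    P u = ((lam : ℂ) ^ 2) • u ∧ Q u = 0 := by
  have hQu : Q u = 0 :=
    apply_eq_zero_of_pencil_apply_eq_zero hP Q (μ := lam ^ 2) hlam (by exact_mod_cast hu)
  rw [hQu, map_zero, smul_zero, sub_zero, sub_eq_zero] at hu
  exact ⟨hu, hQu⟩

/-- Real/imaginary-part splitting in Lemma 3.6(6): if `λ ≠ 0` is real and
`Pu − iλ Q*(Qu) − λ²u = 0`, then `Pu = λ²u` and `Qu = 0`. -/
theorem pencil_kernel_split
    {H Y : Type*} [NormedAddCommGroup H] [InnerProductSpace ℂ H] [CompleteSpace H]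
    [NormedAddCommGroup Y] [InnerProductSpace ℂ Y] [CompleteSpace Y]
    (P : H →L[ℂ] H) (hP : IsSelfAdjoint P)
    (hPnn : ∀ u : H, 0 ≤ (inner ℂ (P u) u : ℂ).re)
    (Q : H →L[ℂ] Y)
    (lam : ℝ) (hlam : lam ≠ 0) (u : H)
    (hu : P u - (Complex.I * (lam : ℂ)) • (ContinuousLinearMap.adjoint Q) (Q u)
        - ((lam : ℂ) ^ 2) • u = 0) :
    P u = ((lam : ℂ) ^ 2) • u ∧ Q u = 0 :=
  pencil_kernel_split_general P hP Q lam hlam u hu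
end

section
/- The unique continuation property UCP(P, Q) holds if and only if for every real λ > 0 the only u ∈ H with Pu − iλ·Q*(Qu) − λ²u = 0 is u = 0. -/
/-! Pairing the pencil equation with `u` and taking imaginary parts leaves `λ ‖Q u‖²`, since
`⟪P u, u⟫` and `λ² ‖u‖²` are real; so a kernel vector has `Q u = 0` and is then a `λ²`-eigenvector
of `P`. -/

section

open ContinuousLinearMap

variable {H Y : Type*} [NormedAddCommGroup H] [InnerProductSpace ℂ H] [CompleteSpace H]
  [NormedAddCommGroup Y] [InnerProductSpace ℂ Y] [CompleteSpace Y]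
  {P : H →L[ℂ] H} (Q : H →L[ℂ] Y)

theorem IsSelfAdjoint.im_inner_dampedPencil_apply_self (hP : IsSelfAdjoint P) (lam μ : ℝ) (u : H) :
    (inner ℂ (P u - (Complex.I * lam) • adjoint Q (Q u) - (μ : ℂ) • u) u).im
      = lam * ‖Q u‖ ^ 2 := by
  have hPu : (inner ℂ (P u) u).im = 0 := hP.isSymmetric.im_inner_apply_self u
  rw [inner_sub_left, inner_sub_left, inner_smul_left, inner_smul_left, adjoint_inner_left,
    inner_self_eq_norm_sq_to_K, inner_self_eq_norm_sq_to_K]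
  simp [hPu, ← Complex.ofReal_pow]

theorem IsSelfAdjoint.dampedPencil_apply_eq_zero_iff (hP : IsSelfAdjoint P) {lam : ℝ}
    (hlam : lam ≠ 0) (μ : ℝ) (u : H) :
    P u - (Complex.I * lam) • adjoint Q (Q u) - (μ : ℂ) • u = 0 ↔ Q u = 0 ∧ P u = (μ : ℂ) • u := by
  constructor
  · intro h
    have hQu : Q u = 0 := by
      have := hP.im_inner_dampedPencil_apply_self Q lam μ u
      rw [h, inner_zero_left, Complex.zero_im, eq_comm] at this
      simpa [hlam] using this
    refine ⟨hQu, ?_⟩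
    rw [hQu, map_zero, smul_zero, sub_zero, sub_eq_zero] at h
    exact h
  · rintro ⟨hQu, hPu⟩
    rw [hQu, hPu, map_zero, smul_zero, sub_zero, sub_self]

end

theorem ucp_iff_pencil_kernel_trivial_general
    {H Y : Type*} [NormedAddCommGroup H] [InnerProductSpace ℂ H] [CompleteSpace H]
    [NormedAddCommGroup Y] [InnerProductSpace ℂ Y] [CompleteSpace Y]
    (P : H →L[ℂ] H) (hP : IsSelfAdjoint P)
    (Q : H →L[ℂ] Y) :
    (∀ lam : ℝ, 0 < lam → ∀ u : H, u ≠ 0 → P u = ((lam : ℂ) ^ 2) • u → Q u ≠ 0) ↔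
      (∀ lam : ℝ, 0 < lam → ∀ u : H,
        P u - (Complex.I * (lam : ℂ)) • (ContinuousLinearMap.adjoint Q) (Q u)
          - ((lam : ℂ) ^ 2) • u = 0 → u = 0) := by
  refine forall₂_congr fun lam hlam => forall_congr' fun u => ?_
  have hker := hP.dampedPencil_apply_eq_zero_iff Q hlam.ne' (lam ^ 2) u
  push_cast at hker
  rw [hker]
  tauto

/-- Lemma 3.6(6) together with its converse (bounded-operator form):
UCP(P, Q) holds iff for every real `λ > 0` the kernel of the damped pencil
`P − iλQ*Q − λ²` is trivial. -/
theorem ucp_iff_pencil_kernel_trivial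
    {H Y : Type*} [NormedAddCommGroup H] [InnerProductSpace ℂ H] [CompleteSpace H]
    [NormedAddCommGroup Y] [InnerProductSpace ℂ Y] [CompleteSpace Y]
    (P : H →L[ℂ] H) (hP : IsSelfAdjoint P)
    (hPnn : ∀ u : H, 0 ≤ (inner ℂ (P u) u : ℂ).re)
    (Q : H →L[ℂ] Y) :
    (∀ lam : ℝ, 0 < lam → ∀ u : H, u ≠ 0 → P u = ((lam : ℂ) ^ 2) • u → Q u ≠ 0) ↔
      (∀ lam : ℝ, 0 < lam → ∀ u : H,
        P u - (Complex.I * (lam : ℂ)) • (ContinuousLinearMap.adjoint Q) (Q u)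
          - ((lam : ℂ) ^ 2) • u = 0 → u = 0) :=
  ucp_iff_pencil_kernel_trivial_general P hP Q
end

section
/- Let f : ℝ → ℝ be continuous such that f is injective on [0, ∞), maps [0, ∞) into [0, ∞), and f(0) = 0, and let f(P) be the operator obtained from f by the continuous functional calculus of P. If UCP(P, Q) holds, then UCP(f(P), Q) holds: for every real λ > 0 and every u ∈ H with u ≠ 0 and f(P)u = λ²u, one has Qu ≠ 0. -/
/-!
Since `P ≥ 0`, `f` is injective on the compact set `σ(P)`, so it has a left inverse `g` that is
continuous on `f(σ(P)) = σ(f(P))`, and then `g(f(P)) = P`. An eigenvector of a self-adjoint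
operator for the eigenvalue `c` is an eigenvector of each continuous function `h` of it, for the
eigenvalue `h(c)` (Stone–Weierstrass). Hence an eigenvector `u` of `f(P)` for `λ²` satisfies
`Pu = μu` with `f(μ) = λ²`; as `f(0) = 0`, `μ > 0`, and UCP(P, Q) applied to `√μ` gives `Qu ≠ 0`.
-/

open Set

theorem Set.InjOn.continuousOn_invFunOn_image {X Y : Type*} [TopologicalSpace X]
    [TopologicalSpace Y] [T2Space Y] [Nonempty X] {f : X → Y} {s : Set X}
    (hs : IsCompact s) (hf : ContinuousOn f s) (hinj : InjOn f s) :
    ContinuousOn (Function.invFunOn f s) (f '' s) := by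
  refine continuousOn_iff_isClosed.mpr fun C hC => ⟨f '' (s ∩ C), ?_, ?_⟩
  · exact ((hs.inter_right hC).image_of_continuousOn (hf.mono inter_subset_left)).isClosed
  · ext y
    constructor
    · rintro ⟨hyC, x, hx, rfl⟩
      rw [mem_preimage, hinj.leftInvOn_invFunOn hx] at hyC
      exact ⟨⟨x, ⟨hx, hyC⟩, rfl⟩, x, hx, rfl⟩
    · rintro ⟨⟨x, ⟨hx, hxC⟩, rfl⟩, -⟩
      exact ⟨by rwa [mem_preimage, hinj.leftInvOn_invFunOn hx], x, hx, rfl⟩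

namespace ContinuousLinearMap

variable {H : Type*} [NormedAddCommGroup H] [InnerProductSpace ℂ H]

theorem mem_spectrum_of_apply_eq_smul {A : H →L[ℂ] H} {c : ℝ} {u : H} (hu0 : u ≠ 0)
    (hu : A u = (c : ℂ) • u) : c ∈ spectrum ℝ A := by
  rintro ⟨v, hv⟩
  have hvu : (v : H →L[ℂ] H) u = 0 := by
    rw [hv, sub_apply, Algebra.algebraMap_eq_smul_one, hu, smul_apply, one_apply_eq_self,
      Complex.coe_smul, sub_self]
  apply hu0
  rw [← one_apply_eq_self (F := H →L[ℂ] H) u, ← v.inv_mul, mul_apply_eq_comp, hvu, map_zero]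

variable [CompleteSpace H]

theorem cfcHom_apply_of_apply_eq_smul {A : H →L[ℂ] H} (hA : IsSelfAdjoint A) {c : ℝ}
    (hc : c ∈ spectrum ℝ A) {u : H} (hu : A u = (c : ℂ) • u) (φ : C(spectrum ℝ A, ℝ)) :
    cfcHom hA φ u = (φ ⟨c, hc⟩ : ℂ) • u := by
  induction φ using ContinuousMap.induction_on_of_compact with
  | const r =>
    change cfcHom hA (algebraMap ℝ _ r) u = _
    rw [AlgHomClass.commutes, Algebra.algebraMap_eq_smul_one, smul_apply,
      one_apply_eq_self, Complex.coe_smul]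
    rfl
  | id => rw [cfcHom_id hA, hu]; rfl
  | star_id => rw [star_trivial, cfcHom_id hA, hu]; rfl
  | add φ ψ hφ hψ => rw [map_add, add_apply, hφ, hψ, ContinuousMap.add_apply,
      Complex.ofReal_add, add_smul]
  | mul φ ψ hφ hψ => rw [map_mul, mul_apply_eq_comp, hψ, map_smul, hφ, smul_smul,
      ContinuousMap.mul_apply, Complex.ofReal_mul, mul_comm]
  | frequently φ hφ =>
    have hclosed : IsClosed {ψ : C(spectrum ℝ A, ℝ) | cfcHom hA ψ u = (ψ ⟨c, hc⟩ : ℂ) • u} :=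
      isClosed_eq ((apply ℂ H u).continuous.comp (cfcHom_continuous hA))
        ((Complex.continuous_ofReal.comp (continuous_eval_const _)).smul continuous_const)
    exact hclosed.closure_subset (mem_closure_of_frequently_of_tendsto hφ Filter.tendsto_id)

theorem cfc_apply_of_apply_eq_smul {A : H →L[ℂ] H} (hA : IsSelfAdjoint A) {c : ℝ} {u : H}
    (hu : A u = (c : ℂ) • u) {g : ℝ → ℝ} (hg : ContinuousOn g (spectrum ℝ A)) :
    cfc g A u = (g c : ℂ) • u := by
  rcases eq_or_ne u 0 with rfl | hu0
  · simp
  rw [cfc_apply g A hA hg,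
    cfcHom_apply_of_apply_eq_smul hA (mem_spectrum_of_apply_eq_smul hu0 hu) hu]
  rfl

end ContinuousLinearMap

theorem cfc_cfc_eq_self_of_leftInvOn {R A : Type*} {p : A → Prop} [CommSemiring R] [StarRing R]
    [MetricSpace R] [IsTopologicalSemiring R] [ContinuousStar R] [TopologicalSpace A] [Ring A]
    [StarRing A] [Algebra R A] [ContinuousFunctionalCalculus R A p]
    [ContinuousMap.UniqueHom R A] {a : A} (ha : p a)
    {f g : R → R} (hgf : LeftInvOn g f (spectrum R a)) (hf : ContinuousOn f (spectrum R a))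
    (hg : ContinuousOn g (f '' spectrum R a)) :
    cfc g (cfc f a) = a := by
  rw [← cfc_comp' g f a hg hf ha, cfc_congr hgf, cfc_id' R a ha]

theorem ucp_functional_calculus_general
    {H Y : Type*} [NormedAddCommGroup H] [InnerProductSpace ℂ H] [CompleteSpace H]
    [NormedAddCommGroup Y] [InnerProductSpace ℂ Y]
    (P : H →L[ℂ] H) (hP : IsSelfAdjoint P)
    (hPnn : ∀ u : H, 0 ≤ (inner ℂ (P u) u : ℂ).re)
    (Q : H →L[ℂ] Y)
    (f : ℝ → ℝ) (hf : Continuous f)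
    (hinj : Set.InjOn f (Set.Ici (0 : ℝ)))
    (hf0 : f 0 = 0)
    (hUCP : ∀ lam : ℝ, 0 < lam → ∀ u : H, u ≠ 0 → P u = ((lam : ℂ) ^ 2) • u → Q u ≠ 0) :
    ∀ lam : ℝ, 0 < lam → ∀ u : H, u ≠ 0 → cfc f P u = ((lam : ℂ) ^ 2) • u →
      Q u ≠ 0 := by
  intro lam hlam u hu0 hfPu
  have hS : spectrum ℝ P ⊆ Ici 0 := SpectrumRestricts.nnreal_iff.mp
    (ContinuousLinearMap.isPositive_def'.mpr ⟨hP, hPnn⟩).spectrumRestricts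
  have hinjS : InjOn f (spectrum ℝ P) := hinj.mono hS
  set g := Function.invFunOn f (spectrum ℝ P)
  have hgf : LeftInvOn g f (spectrum ℝ P) := hinjS.leftInvOn_invFunOn
  have hg : ContinuousOn g (f '' spectrum ℝ P) :=
    hinjS.continuousOn_invFunOn_image (spectrum.isCompact P) hf.continuousOn
  have hPg : cfc g (cfc f P) = P := cfc_cfc_eq_self_of_leftInvOn hP hgf hf.continuousOn hg
  replace hfPu : cfc f P u = ((lam ^ 2 : ℝ) : ℂ) • u := by push_cast; exact hfPu
  obtain ⟨μ, hμS, hfμ⟩ : lam ^ 2 ∈ f '' spectrum ℝ P :=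
    cfc_map_spectrum f P ▸ ContinuousLinearMap.mem_spectrum_of_apply_eq_smul hu0 hfPu
  have hPu : P u = (μ : ℂ) • u := by
    rw [← hPg, ContinuousLinearMap.cfc_apply_of_apply_eq_smul (cfc_predicate f P) hfPu
      (cfc_map_spectrum f P ▸ hg), ← hfμ, hgf hμS]
  have hμ : 0 < μ := (hS hμS).lt_of_ne <| by
    rintro rfl
    rw [hf0] at hfμ
    exact (pow_pos hlam 2).ne hfμ
  refine hUCP √μ (Real.sqrt_pos.mpr hμ) u hu0 ?_
  rw [hPu, ← Complex.ofReal_pow, Real.sq_sqrt hμ.le]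

/-- Lemma 3.6(3) (bounded-operator form): if `f : ℝ → ℝ` is continuous, injective on
`[0, ∞)`, maps `[0, ∞)` into `[0, ∞)` with `f(0) = 0`, and UCP(P, Q) holds, then
UCP(f(P), Q) holds. -/
theorem ucp_functional_calculus
    {H Y : Type*} [NormedAddCommGroup H] [InnerProductSpace ℂ H] [CompleteSpace H]
    [NormedAddCommGroup Y] [InnerProductSpace ℂ Y] [CompleteSpace Y]
    (P : H →L[ℂ] H) (hP : IsSelfAdjoint P)
    (hPnn : ∀ u : H, 0 ≤ (inner ℂ (P u) u : ℂ).re)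
    (Q : H →L[ℂ] Y)
    (f : ℝ → ℝ) (hf : Continuous f)
    (hinj : Set.InjOn f (Set.Ici (0 : ℝ)))
    (hmaps : Set.MapsTo f (Set.Ici (0 : ℝ)) (Set.Ici (0 : ℝ)))
    (hf0 : f 0 = 0)
    (hUCP : ∀ lam : ℝ, 0 < lam → ∀ u : H, u ≠ 0 → P u = ((lam : ℂ) ^ 2) • u → Q u ≠ 0) :
    ∀ lam : ℝ, 0 < lam → ∀ u : H, u ≠ 0 → cfc f P u = ((lam : ℂ) ^ 2) • u →
      Q u ≠ 0 :=
  ucp_functional_calculus_general P hP hPnn Q f hf hinj hf0 hUCP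
end

section
/- Let λ ∈ ℂ with Im λ > 0. Then the bounded linear operator H → H given by u ↦ Pu − iλ·Q*(Qu) − λ²u is bijective (and hence has a bounded inverse). -/
/-!
Multiplying the quadratic form by `λ` makes every term nonnegative:
`Im (λ ⟪P_λ u, u⟫) = Im λ · Re ⟪P u, u⟫ + |λ|² ‖Q u‖² + Im λ · |λ|² ‖u‖²`, using that `⟪P u, u⟫`
is real. Hence `|⟪P_λ u, u⟫| ≥ Im λ · |λ| · ‖u‖²`, and an operator coercive in this sense is
bounded below (so injective with closed range) and has range with trivial orthogonal complement.
-/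

open ContinuousLinearMap Complex
open scoped InnerProductSpace ComplexConjugate

namespace ContinuousLinearMap

variable {𝕜 E : Type*} [RCLike 𝕜] [NormedAddCommGroup E] [InnerProductSpace 𝕜 E]
  {T : E →L[𝕜] E} {c : ℝ}

lemma mul_norm_le_norm_apply_of_coercive (hT : ∀ u, c * ‖u‖ ^ 2 ≤ ‖⟪T u, u⟫_𝕜‖) (u : E) :
    c * ‖u‖ ≤ ‖T u‖ := by
  rcases (norm_nonneg u).eq_or_lt with hu | hu
  · simp [← hu]
  · refine le_of_mul_le_mul_right ?_ hu
    calc c * ‖u‖ * ‖u‖ = c * ‖u‖ ^ 2 := by ring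
      _ ≤ ‖⟪T u, u⟫_𝕜‖ := hT u
      _ ≤ ‖T u‖ * ‖u‖ := norm_inner_le_norm _ _

lemma antilipschitz_of_coercive (hc : 0 < c) (hT : ∀ u, c * ‖u‖ ^ 2 ≤ ‖⟪T u, u⟫_𝕜‖) :
    AntilipschitzWith ⟨c⁻¹, by positivity⟩ T :=
  T.antilipschitz_of_bound fun u =>
    (le_inv_mul_iff₀ hc).2 (mul_norm_le_norm_apply_of_coercive hT u)

lemma orthogonal_range_eq_bot_of_coercive (hc : 0 < c) (hT : ∀ u, c * ‖u‖ ^ 2 ≤ ‖⟪T u, u⟫_𝕜‖) :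
    T.rangeᗮ = ⊥ := by
  refine (Submodule.eq_bot_iff _).2 fun v hv => ?_
  have h0 : ⟪T v, v⟫_𝕜 = 0 :=
    (Submodule.mem_orthogonal _ v).1 hv _ (LinearMap.mem_range_self _ v)
  have hv2 : c * ‖v‖ ^ 2 ≤ 0 := by simpa [h0] using hT v
  have : ‖v‖ ^ 2 = 0 := le_antisymm (nonpos_of_mul_nonpos_right hv2 hc) (by positivity)
  simpa using this

theorem bijective_of_coercive [CompleteSpace E] (hc : 0 < c)
    (hT : ∀ u, c * ‖u‖ ^ 2 ≤ ‖⟪T u, u⟫_𝕜‖) : Function.Bijective T := by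
  have hanti := antilipschitz_of_coercive hc hT
  have hclosed : IsClosed (T.range : Set E) := by
    simpa only [LinearMap.coe_range, coe_coe] using hanti.isClosed_range T.uniformContinuous
  have : CompleteSpace T.range := hclosed.completeSpace_coe
  refine ⟨hanti.injective, LinearMap.range_eq_top.1 ?_⟩
  exact Submodule.orthogonal_eq_bot_iff.1 (orthogonal_range_eq_bot_of_coercive hc hT)

end ContinuousLinearMap

section DampedPencil

variable {H Y : Type*} [NormedAddCommGroup H] [InnerProductSpace ℂ H]
  [NormedAddCommGroup Y] [InnerProductSpace ℂ Y] [CompleteSpace H] [CompleteSpace Y]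

noncomputable def dampedPencil (P : H →L[ℂ] H) (Q : H →L[ℂ] Y) (lam : ℂ) : H →L[ℂ] H :=
  P - (I * lam) • (adjoint Q ∘L Q) - lam ^ 2 • ContinuousLinearMap.id ℂ H

lemma dampedPencil_apply (P : H →L[ℂ] H) (Q : H →L[ℂ] Y) (lam : ℂ) (u : H) :
    dampedPencil P Q lam u = P u - (I * lam) • adjoint Q (Q u) - lam ^ 2 • u :=
  rfl

lemma inner_dampedPencil_apply_self (P : H →L[ℂ] H) (Q : H →L[ℂ] Y) (lam : ℂ) (u : H) :
    ⟪dampedPencil P Q lam u, u⟫_ℂ =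
      ⟪P u, u⟫_ℂ + I * conj lam * (‖Q u‖ ^ 2 : ℝ) - conj lam ^ 2 * (‖u‖ ^ 2 : ℝ) := by
  rw [dampedPencil_apply, inner_sub_left, inner_sub_left, inner_smul_left, inner_smul_left,
    adjoint_inner_left, inner_self_eq_norm_sq_to_K, inner_self_eq_norm_sq_to_K]
  simp only [map_mul, map_pow, conj_I, ofReal_pow, RCLike.ofReal_eq_complex_ofReal]
  ring

lemma im_mul_inner_dampedPencil_apply_self {P : H →L[ℂ] H} (hP : IsSelfAdjoint P)
    (Q : H →L[ℂ] Y) (lam : ℂ) (u : H) :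
    (lam * ⟪dampedPencil P Q lam u, u⟫_ℂ).im =
      lam.im * (⟪P u, u⟫_ℂ).re + ‖lam‖ ^ 2 * ‖Q u‖ ^ 2 + lam.im * ‖lam‖ ^ 2 * ‖u‖ ^ 2 := by
  have hPu : ⟪P u, u⟫_ℂ = ((⟪P u, u⟫_ℂ).re : ℂ) :=
    (hP.isSymmetric.coe_reApplyInnerSelf_apply u).symm
  rw [inner_dampedPencil_apply_self, hPu, ← normSq_eq_norm_sq]
  simp only [mul_im, mul_re, sub_re, sub_im, add_re, add_im, ofReal_re, ofReal_im, I_re, I_im,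
    conj_re, conj_im, pow_two, normSq_apply]
  ring

lemma mul_norm_sq_le_norm_inner_dampedPencil_apply_self {P : H →L[ℂ] H} (hP : IsSelfAdjoint P)
    (hPnn : ∀ u : H, 0 ≤ (⟪P u, u⟫_ℂ).re) (Q : H →L[ℂ] Y) {lam : ℂ} (hlam : 0 < lam.im)
    (u : H) : lam.im * ‖lam‖ * ‖u‖ ^ 2 ≤ ‖⟪dampedPencil P Q lam u, u⟫_ℂ‖ := by
  refine le_of_mul_le_mul_left ?_ (hlam.trans_le (im_le_norm lam))
  calc ‖lam‖ * (lam.im * ‖lam‖ * ‖u‖ ^ 2)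
      ≤ lam.im * (⟪P u, u⟫_ℂ).re + ‖lam‖ ^ 2 * ‖Q u‖ ^ 2 + lam.im * ‖lam‖ ^ 2 * ‖u‖ ^ 2 := by
        nlinarith [mul_nonneg hlam.le (hPnn u), mul_nonneg (sq_nonneg ‖lam‖) (sq_nonneg ‖Q u‖)]
    _ = (lam * ⟪dampedPencil P Q lam u, u⟫_ℂ).im :=
        (im_mul_inner_dampedPencil_apply_self hP Q lam u).symm
    _ ≤ ‖lam * ⟪dampedPencil P Q lam u, u⟫_ℂ‖ := im_le_norm _
    _ = ‖lam‖ * ‖⟪dampedPencil P Q lam u, u⟫_ℂ‖ := norm_mul _ _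

end DampedPencil

/-- Step 1 of the proof of Lemma 3.9 (bounded-operator form): for `Im λ > 0`
the damped pencil `u ↦ Pu − iλ Q*(Qu) − λ²u` is bijective. -/
theorem pencil_bijective_upper_half_plane
    {H Y : Type*} [NormedAddCommGroup H] [InnerProductSpace ℂ H] [CompleteSpace H]
    [NormedAddCommGroup Y] [InnerProductSpace ℂ Y] [CompleteSpace Y]
    (P : H →L[ℂ] H) (hP : IsSelfAdjoint P)
    (hPnn : ∀ u : H, 0 ≤ (inner ℂ (P u) u : ℂ).re)
    (Q : H →L[ℂ] Y)
    (lam : ℂ) (hlam : 0 < lam.im) :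
    Function.Bijective (fun u : H =>
      P u - (Complex.I * lam) • (ContinuousLinearMap.adjoint Q) (Q u) - (lam ^ 2) • u) := by
  show Function.Bijective (dampedPencil P Q lam)
  exact bijective_of_coercive (mul_pos hlam (hlam.trans_le (im_le_norm lam)))
    (mul_norm_sq_le_norm_inner_dampedPencil_apply_self hP hPnn Q hlam)
end

section
/- Let α > 0 and γ ∈ [0, 1/2] with 2γ ≤ α, let ρ₀ > 0 and K > 0, and let f : ℝ → ℝ be differentiable at every σ ≥ ρ₀² with f'(σ) ≥ σ^(α−1)/K for all σ ≥ ρ₀² (real powers). Then there exists a constant C > 0 such that for all real λ̃ ≥ ρ₀ and all real ρ ≥ (3/2)·λ̃: (1 + ρ²)^(2γ)·λ̃^(2α − 4γ) ≤ C·( f(ρ²) − f(λ̃²) ). -/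
set_option maxHeartbeats 1000000 in
/-- High-frequency regime estimate (regime S_ρ, Step 4 of the proof of Proposition 3.19):
there is `C > 0` such that for `λ̃ ≥ ρ₀` and `ρ ≥ (3/2)λ̃`,
`(1 + ρ²)^(2γ) · λ̃^(2α − 4γ) ≤ C(f(ρ²) − f(λ̃²))`. -/
theorem regime_high_frequency
    (α γ ρ₀ K : ℝ) (hα : 0 < α) (hγ0 : 0 ≤ γ) (hγ : γ ≤ 1 / 2) (hγα : 2 * γ ≤ α)
    (hρ₀ : 0 < ρ₀) (hK : 0 < K) (f : ℝ → ℝ)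
    (hdiff : ∀ σ : ℝ, ρ₀ ^ 2 ≤ σ → DifferentiableAt ℝ f σ)
    (hderiv : ∀ σ : ℝ, ρ₀ ^ 2 ≤ σ → σ ^ (α - 1) / K ≤ deriv f σ) :
    ∃ C : ℝ, 0 < C ∧ ∀ lam ρ : ℝ, ρ₀ ≤ lam → (3 / 2) * lam ≤ ρ →
      (1 + ρ ^ 2) ^ (2 * γ) * lam ^ (2 * α - 4 * γ) ≤ C * (f (ρ ^ 2) - f (lam ^ 2)) := by
  set B : ℝ := 1 + ρ₀⁻¹ ^ 2 with hB
  have hB1 : (1 : ℝ) ≤ B := by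
    rw [hB]; nlinarith [sq_nonneg ρ₀⁻¹]
  refine ⟨9 * K / 5 * B, by positivity, ?_⟩
  intro lam ρ hlam hρlam
  have hl0 : 0 < lam := lt_of_lt_of_le hρ₀ hlam
  have hρ0 : 0 < ρ := lt_of_lt_of_le (by nlinarith) hρlam
  have hlρ : lam ≤ ρ := by nlinarith
  have hl2 : ρ₀ ^ 2 ≤ lam ^ 2 := by nlinarith
  have hr2 : ρ₀ ^ 2 ≤ ρ ^ 2 := by nlinarith
  have hsq : lam ^ 2 ≤ ρ ^ 2 := by nlinarith
  have hgap : ρ ^ 2 ≤ (9 / 5) * (ρ ^ 2 - lam ^ 2) := by nlinarith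
  -- mean value inequality
  have key : ∀ m : ℝ, (∀ σ : ℝ, lam ^ 2 ≤ σ → σ ≤ ρ ^ 2 → m ≤ deriv f σ) →
      m * (ρ ^ 2 - lam ^ 2) ≤ f (ρ ^ 2) - f (lam ^ 2) := by
    intro m hm
    have hconv : Convex ℝ (Set.Icc (lam ^ 2) (ρ ^ 2)) := convex_Icc _ _
    have hcont : ContinuousOn f (Set.Icc (lam ^ 2) (ρ ^ 2)) := fun x hx =>
      (hdiff x (le_trans hl2 hx.1)).continuousAt.continuousWithinAt
    have hdo : DifferentiableOn ℝ f (interior (Set.Icc (lam ^ 2) (ρ ^ 2))) := by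
      intro x hx
      rw [interior_Icc] at hx
      exact (hdiff x (le_trans hl2 hx.1.le)).differentiableWithinAt
    have hge : ∀ x ∈ interior (Set.Icc (lam ^ 2) (ρ ^ 2)), m ≤ deriv f x := by
      intro x hx
      rw [interior_Icc] at hx
      exact hm x hx.1.le hx.2.le
    exact hconv.mul_sub_le_image_sub_of_le_deriv hcont hdo hge (lam ^ 2)
      (Set.mem_Icc.2 ⟨le_refl _, hsq⟩) (ρ ^ 2) (Set.mem_Icc.2 ⟨hsq, le_refl _⟩) hsq
  -- bound on (1+ρ²)^(2γ)
  have h1 : (1 + ρ ^ 2) ^ (2 * γ) ≤ B * ρ ^ (4 * γ) := by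
    have hle : (1 + ρ ^ 2 : ℝ) ≤ B * ρ ^ 2 := by
      have hρ₀ρ : ρ₀ ≤ ρ := le_trans hlam hlρ
      have h1 : (1:ℝ) ≤ ρ₀⁻¹ * ρ := by
        rw [inv_mul_eq_div, le_div_iff₀ hρ₀]
        linarith
      have h2 : (1:ℝ) ≤ ρ₀⁻¹ ^ 2 * ρ ^ 2 := by nlinarith [inv_pos.2 hρ₀]
      rw [hB]; nlinarith [h2]
    calc (1 + ρ ^ 2) ^ (2 * γ) ≤ (B * ρ ^ 2) ^ (2 * γ) := by
          apply Real.rpow_le_rpow (by positivity) hle (by positivity)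
      _ = B ^ (2 * γ) * (ρ ^ 2) ^ (2 * γ) :=
          Real.mul_rpow (by positivity) (by positivity)
      _ ≤ B * ρ ^ (4 * γ) := by
          have h2 : B ^ (2 * γ) ≤ B := by
            calc B ^ (2 * γ) ≤ B ^ (1 : ℝ) :=
                  Real.rpow_le_rpow_of_exponent_le hB1 (by linarith)
              _ = B := Real.rpow_one B
          have h3 : ((ρ ^ 2 : ℝ)) ^ (2 * γ) = ρ ^ (4 * γ) := by
            rw [← Real.rpow_natCast ρ 2, ← Real.rpow_mul hρ0.le]
            congr 1; push_cast; ring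
          rw [h3]
          gcongr
  rcases le_or_gt α 1 with hα1 | hα1
  · -- low α case: use m = ρ^(2α-2)/K
    have hm : ρ ^ (2 * α - 2) / K * (ρ ^ 2 - lam ^ 2) ≤ f (ρ ^ 2) - f (lam ^ 2) := by
      apply key
      intro σ h1σ h2σ
      have hσρ₀ : ρ₀ ^ 2 ≤ σ := le_trans hl2 h1σ
      refine le_trans ?_ (hderiv σ hσρ₀)
      have : (ρ ^ 2 : ℝ) ^ (α - 1) ≤ σ ^ (α - 1) :=
        Real.rpow_le_rpow_of_nonpos (by nlinarith) h2σ (by linarith)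
      have heq : (ρ ^ 2 : ℝ) ^ (α - 1) = ρ ^ (2 * α - 2) := by
        rw [← Real.rpow_natCast ρ 2, ← Real.rpow_mul hρ0.le]
        congr 1; push_cast; ring
      rw [heq] at this
      exact div_le_div_of_nonneg_right this hK.le
    -- LHS ≤ B * ρ^(2α)
    have hlhs : (1 + ρ ^ 2) ^ (2 * γ) * lam ^ (2 * α - 4 * γ) ≤ B * ρ ^ (2 * α) := by
      have h4 : lam ^ (2 * α - 4 * γ) ≤ ρ ^ (2 * α - 4 * γ) :=
        Real.rpow_le_rpow hl0.le hlρ (by linarith)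
      have h5 : ρ ^ (4 * γ) * ρ ^ (2 * α - 4 * γ) = ρ ^ (2 * α) := by
        rw [← Real.rpow_add hρ0]; congr 1; ring
      calc (1 + ρ ^ 2) ^ (2 * γ) * lam ^ (2 * α - 4 * γ)
          ≤ (B * ρ ^ (4 * γ)) * ρ ^ (2 * α - 4 * γ) := by
            apply mul_le_mul h1 h4 (by positivity) (by positivity)
        _ = B * (ρ ^ (4 * γ) * ρ ^ (2 * α - 4 * γ)) := by ring
        _ = B * ρ ^ (2 * α) := by rw [h5]
    -- RHS bound
    have hrhs : B * ρ ^ (2 * α) ≤ 9 * K / 5 * B * (f (ρ ^ 2) - f (lam ^ 2)) := by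
      have h6 : ρ ^ (2 * α) = ρ ^ (2 * α - 2) * ρ ^ 2 := by
        rw [← Real.rpow_natCast ρ 2, ← Real.rpow_add hρ0]
        congr 1; push_cast; ring
      have h7 : ρ ^ (2 * α - 2) * ρ ^ 2 ≤ (9/5) * (ρ ^ (2 * α - 2) * (ρ ^ 2 - lam ^ 2)) := by
        have := Real.rpow_pos_of_pos hρ0 (2 * α - 2)
        nlinarith
      calc B * ρ ^ (2 * α) = B * (ρ ^ (2 * α - 2) * ρ ^ 2) := by rw [h6]
        _ ≤ B * ((9/5) * (ρ ^ (2 * α - 2) * (ρ ^ 2 - lam ^ 2))) := by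
            apply mul_le_mul_of_nonneg_left h7 (by positivity)
        _ = 9 * K / 5 * B * (ρ ^ (2 * α - 2) / K * (ρ ^ 2 - lam ^ 2)) := by
            field_simp
        _ ≤ 9 * K / 5 * B * (f (ρ ^ 2) - f (lam ^ 2)) := by
            apply mul_le_mul_of_nonneg_left hm (by positivity)
    exact le_trans hlhs hrhs
  · -- high α case: use m = lam^(2α-2)/K
    have hm : lam ^ (2 * α - 2) / K * (ρ ^ 2 - lam ^ 2) ≤ f (ρ ^ 2) - f (lam ^ 2) := by
      apply key
      intro σ h1σ h2σ
      have hσρ₀ : ρ₀ ^ 2 ≤ σ := le_trans hl2 h1σ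
      refine le_trans ?_ (hderiv σ hσρ₀)
      have : (lam ^ 2 : ℝ) ^ (α - 1) ≤ σ ^ (α - 1) :=
        Real.rpow_le_rpow (by positivity) h1σ (by linarith)
      have heq : (lam ^ 2 : ℝ) ^ (α - 1) = lam ^ (2 * α - 2) := by
        rw [← Real.rpow_natCast lam 2, ← Real.rpow_mul hl0.le]
        congr 1; push_cast; ring
      rw [heq] at this
      exact div_le_div_of_nonneg_right this hK.le
    -- LHS ≤ B * ρ^2 * lam^(2α-2)
    have hlhs : (1 + ρ ^ 2) ^ (2 * γ) * lam ^ (2 * α - 4 * γ) ≤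
        B * (ρ ^ 2 * lam ^ (2 * α - 2)) := by
      have h4 : ρ ^ (4 * γ) * lam ^ (2 * α - 4 * γ) ≤ ρ ^ 2 * lam ^ (2 * α - 2) := by
        have e1 : ρ ^ (4 * γ) = ρ ^ (4 * γ - 2) * ρ ^ 2 := by
          rw [← Real.rpow_natCast ρ 2, ← Real.rpow_add hρ0]
          congr 1; push_cast; ring
        have e2 : lam ^ (2 * α - 4 * γ) = lam ^ (2 - 4 * γ) * lam ^ (2 * α - 2) := by
          rw [← Real.rpow_add hl0]; congr 1; ring
        have e3 : ρ ^ (4 * γ - 2) ≤ lam ^ (4 * γ - 2) :=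
          Real.rpow_le_rpow_of_nonpos hl0 hlρ (by linarith)
        have e4 : lam ^ (4 * γ - 2) * lam ^ (2 - 4 * γ) = 1 := by
          rw [← Real.rpow_add hl0, show 4 * γ - 2 + (2 - 4 * γ) = 0 by ring, Real.rpow_zero]
        have e5 : ρ ^ (4 * γ - 2) * lam ^ (2 - 4 * γ) ≤ 1 := by
          calc ρ ^ (4 * γ - 2) * lam ^ (2 - 4 * γ)
              ≤ lam ^ (4 * γ - 2) * lam ^ (2 - 4 * γ) := by
                apply mul_le_mul_of_nonneg_right e3 (by positivity)
            _ = 1 := e4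
        calc ρ ^ (4 * γ) * lam ^ (2 * α - 4 * γ)
            = (ρ ^ (4 * γ - 2) * lam ^ (2 - 4 * γ)) * (ρ ^ 2 * lam ^ (2 * α - 2)) := by
              rw [e1, e2]; ring
          _ ≤ 1 * (ρ ^ 2 * lam ^ (2 * α - 2)) := by
              apply mul_le_mul_of_nonneg_right e5 (by positivity)
          _ = ρ ^ 2 * lam ^ (2 * α - 2) := one_mul _
      calc (1 + ρ ^ 2) ^ (2 * γ) * lam ^ (2 * α - 4 * γ)
          ≤ (B * ρ ^ (4 * γ)) * lam ^ (2 * α - 4 * γ) := by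
            apply mul_le_mul_of_nonneg_right h1 (by positivity)
        _ = B * (ρ ^ (4 * γ) * lam ^ (2 * α - 4 * γ)) := by ring
        _ ≤ B * (ρ ^ 2 * lam ^ (2 * α - 2)) := by
            apply mul_le_mul_of_nonneg_left h4 (by positivity)
    have hrhs : B * (ρ ^ 2 * lam ^ (2 * α - 2)) ≤
        9 * K / 5 * B * (f (ρ ^ 2) - f (lam ^ 2)) := by
      have h7 : ρ ^ 2 * lam ^ (2 * α - 2) ≤
          (9/5) * (lam ^ (2 * α - 2) * (ρ ^ 2 - lam ^ 2)) := by
        have := Real.rpow_pos_of_pos hl0 (2 * α - 2)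
        nlinarith
      calc B * (ρ ^ 2 * lam ^ (2 * α - 2))
          ≤ B * ((9/5) * (lam ^ (2 * α - 2) * (ρ ^ 2 - lam ^ 2))) := by
            apply mul_le_mul_of_nonneg_left h7 (by positivity)
        _ = 9 * K / 5 * B * (lam ^ (2 * α - 2) / K * (ρ ^ 2 - lam ^ 2)) := by
            field_simp
        _ ≤ 9 * K / 5 * B * (f (ρ ^ 2) - f (lam ^ 2)) := by
            apply mul_le_mul_of_nonneg_left hm (by positivity)
    exact le_trans hlhs hrhs
end

section
/- Let α > 0 and γ ∈ [0, 1/2] with 2γ ≤ α, let ρ₀ > 0 and K > 0, and let f : ℝ → ℝ be differentiable at every σ ≥ ρ₀² with f'(σ) ≥ σ^(α−1)/K for all σ ≥ ρ₀² (real powers). Then there exists a constant C > 0 such that for all real λ̃ ≥ 2ρ₀ and all real ρ with ρ₀ ≤ ρ ≤ λ̃/2: (1 + ρ²)^(2γ)·λ̃^(2 − 2·max(2γ + 1 − α, 0)) ≤ C·( f(λ̃²) − f(ρ²) ). -/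
set_option maxHeartbeats 1000000


/-- Low-frequency regime estimate (regime S_λ̃, Step 5 of the proof of Proposition 3.19):
there is `C > 0` such that for `λ̃ ≥ 2ρ₀` and `ρ₀ ≤ ρ ≤ λ̃/2`,
`(1 + ρ²)^(2γ) · λ̃^(2 − 2(2γ+1−α)₊) ≤ C(f(λ̃²) − f(ρ²))`. -/
theorem regime_low_frequency
    (α γ ρ₀ K : ℝ) (hα : 0 < α) (hγ0 : 0 ≤ γ) (hγ : γ ≤ 1 / 2) (hγα : 2 * γ ≤ α)
    (hρ₀ : 0 < ρ₀) (hK : 0 < K) (f : ℝ → ℝ)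
    (hdiff : ∀ σ : ℝ, ρ₀ ^ 2 ≤ σ → DifferentiableAt ℝ f σ)
    (hderiv : ∀ σ : ℝ, ρ₀ ^ 2 ≤ σ → σ ^ (α - 1) / K ≤ deriv f σ) :
    ∃ C : ℝ, 0 < C ∧ ∀ lam ρ : ℝ, 2 * ρ₀ ≤ lam → ρ₀ ≤ ρ → ρ ≤ lam / 2 →
      (1 + ρ ^ 2) ^ (2 * γ) * lam ^ (2 - 2 * max (2 * γ + 1 - α) 0)
        ≤ C * (f (lam ^ 2) - f (ρ ^ 2)) := by
  set m : ℝ := max (2 * γ + 1 - α) 0 with hm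
  set c₀ : ℝ := min ((1/2 : ℝ) ^ (α - 1)) 1 with hc₀
  have hc₀pos : 0 < c₀ := lt_min (Real.rpow_pos_of_pos (by norm_num) _) one_pos
  set C₁ : ℝ := 1 / (4 * ρ₀ ^ 2) + 1 / 4 with hC₁
  have hC₁pos : 0 < C₁ := by positivity
  set e : ℝ := 4 * γ + 2 - 2 * m - 2 * α with he
  have he0 : e ≤ 0 := by
    rcases le_or_gt (2 * γ + 1 - α) 0 with h | h
    · have : m = 0 := max_eq_right h
      rw [he, this]; nlinarith
    · have : m = 2 * γ + 1 - α := max_eq_left h.le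
      rw [he, this]; ring_nf; nlinarith
  set C₂ : ℝ := (2 * ρ₀) ^ e with hC₂
  have hC₂pos : 0 < C₂ := Real.rpow_pos_of_pos (by positivity) _
  refine ⟨C₁ ^ (2 * γ) * C₂ * (2 * K / c₀), by positivity, ?_⟩
  intro lam ρ hlam hρ hρlam
  have hlampos : 0 < lam := lt_of_lt_of_le (by positivity) hlam
  have hL : (0 : ℝ) < lam ^ 2 := by positivity
  have hρ0sq : ρ₀ ^ 2 ≤ ρ ^ 2 := pow_le_pow_left₀ hρ₀.le hρ 2
  have hρsq : ρ ^ 2 ≤ lam ^ 2 / 4 := by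
    have : ρ ^ 2 ≤ (lam / 2) ^ 2 := pow_le_pow_left₀ (le_trans hρ₀.le hρ) hρlam 2
    nlinarith
  have hsq : 4 * ρ₀ ^ 2 ≤ lam ^ 2 := by nlinarith
  have hhalf : ρ₀ ^ 2 ≤ lam ^ 2 / 2 := by nlinarith
  -- continuity / monotonicity of f on [ρ₀², ∞)
  have hcont : ContinuousOn f (Set.Ici (ρ₀ ^ 2)) := fun x hx =>
    ((hdiff x hx).continuousAt).continuousWithinAt
  have hmono : StrictMonoOn f (Set.Ici (ρ₀ ^ 2)) := by
    apply strictMonoOn_of_deriv_pos (convex_Ici _) hcont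
    intro x hx
    rw [interior_Ici] at hx
    have hx' : ρ₀ ^ 2 ≤ x := le_of_lt hx
    have hxpos : 0 < x := lt_of_lt_of_le (by positivity) hx'
    calc (0:ℝ) < x ^ (α - 1) / K := by positivity
      _ ≤ deriv f x := hderiv x hx'
  -- mean value theorem on [lam²/2, lam²]
  have hab : lam ^ 2 / 2 < lam ^ 2 := by nlinarith
  have hsub : Set.Icc (lam ^ 2 / 2) (lam ^ 2) ⊆ Set.Ici (ρ₀ ^ 2) := fun x hx =>
    le_trans hhalf hx.1
  obtain ⟨c, hcmem, hceq⟩ := exists_deriv_eq_slope f hab (hcont.mono hsub)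
    (fun x hx => (hdiff x (le_trans hhalf hx.1.le)).differentiableWithinAt)
  have hcpos : 0 < c := lt_trans (by positivity) hcmem.1
  have hcge : ρ₀ ^ 2 ≤ c := le_trans hhalf hcmem.1.le
  -- lower bound on the derivative at c
  have hcd : (lam ^ 2) ^ (α - 1) * c₀ / K ≤ deriv f c := by
    refine le_trans ?_ (hderiv c hcge)
    apply div_le_div_of_nonneg_right _ hK.le
    rcases le_or_gt 1 α with h1 | h1
    · have : (lam ^ 2 / 2) ^ (α - 1) ≤ c ^ (α - 1) :=
        Real.rpow_le_rpow (by positivity) hcmem.1.le (by linarith)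
      refine le_trans ?_ this
      rw [show lam ^ 2 / 2 = lam ^ 2 * (1/2) by ring,
        Real.mul_rpow hL.le (by norm_num)]
      exact mul_le_mul_of_nonneg_left (min_le_left _ _) (Real.rpow_nonneg hL.le _)
    · have : (lam ^ 2) ^ (α - 1) ≤ c ^ (α - 1) :=
        Real.rpow_le_rpow_of_nonpos hcpos hcmem.2.le (by linarith)
      refine le_trans ?_ this
      calc (lam ^ 2) ^ (α - 1) * c₀ ≤ (lam ^ 2) ^ (α - 1) * 1 :=
            mul_le_mul_of_nonneg_left (min_le_right _ _) (Real.rpow_nonneg hL.le _)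
        _ = (lam ^ 2) ^ (α - 1) := mul_one _
  -- quantitative increment bound
  have hkey : (lam ^ 2) ^ α * (c₀ / (2 * K)) ≤ f (lam ^ 2) - f (ρ ^ 2) := by
    have hmle : f (ρ ^ 2) ≤ f (lam ^ 2 / 2) := by
      rcases eq_or_lt_of_le (show ρ ^ 2 ≤ lam ^ 2 / 2 by linarith) with h | h
      · rw [h]
      · exact (hmono (Set.mem_Ici.mpr hρ0sq) (Set.mem_Ici.mpr hhalf) h).le
    have hslope : f (lam ^ 2) - f (lam ^ 2 / 2) = (lam ^ 2 / 2) * deriv f c := by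
      have hne : lam ^ 2 / 2 ≠ 0 := by positivity
      have h2 : lam ^ 2 - lam ^ 2 / 2 = lam ^ 2 / 2 := by ring
      rw [hceq, h2, mul_comm, div_mul_cancel₀ _ hne]
    have : (lam ^ 2 / 2) * ((lam ^ 2) ^ (α - 1) * c₀ / K) ≤
        (lam ^ 2 / 2) * deriv f c :=
      mul_le_mul_of_nonneg_left hcd (by positivity)
    have heq : (lam ^ 2 / 2) * ((lam ^ 2) ^ (α - 1) * c₀ / K) =
        (lam ^ 2) ^ α * (c₀ / (2 * K)) := by
      have h' : (lam ^ 2) ^ (α - 1) * (lam ^ 2) = (lam ^ 2) ^ α := by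
        rw [← Real.rpow_add_one hL.ne' (α - 1)]; ring_nf
      rw [← h']; ring
    linarith [hslope ▸ (heq ▸ this)]
  -- upper bound on the left-hand side
  have hlhs : (1 + ρ ^ 2) ^ (2 * γ) * lam ^ (2 - 2 * m) ≤
      C₁ ^ (2 * γ) * C₂ * (lam ^ 2) ^ α := by
    have h1ρ : 1 + ρ ^ 2 ≤ C₁ * lam ^ 2 := by
      have h1 : (1:ℝ) ≤ lam ^ 2 / (4 * ρ₀ ^ 2) := by
        rw [le_div_iff₀ (by positivity)]; nlinarith
      rw [hC₁]
      calc 1 + ρ ^ 2 ≤ lam ^ 2 / (4 * ρ₀ ^ 2) + lam ^ 2 / 4 := by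
            have := hρsq; linarith
        _ = (1 / (4 * ρ₀ ^ 2) + 1 / 4) * lam ^ 2 := by ring
    have hstep1 : (1 + ρ ^ 2) ^ (2 * γ) ≤ (C₁ * lam ^ 2) ^ (2 * γ) :=
      Real.rpow_le_rpow (by positivity) h1ρ (by positivity)
    have hlam2 : ((lam ^ 2 : ℝ)) = lam ^ (2 : ℝ) := by
      rw [← Real.rpow_natCast lam 2]; norm_num
    have hstep2 : (C₁ * lam ^ 2) ^ (2 * γ) = C₁ ^ (2 * γ) * lam ^ (4 * γ) := by
      rw [Real.mul_rpow hC₁pos.le hL.le, hlam2, ← Real.rpow_mul hlampos.le,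
        show (2 : ℝ) * (2 * γ) = 4 * γ by ring]
    have hmain : lam ^ (4 * γ) * lam ^ (2 - 2 * m) ≤ C₂ * (lam ^ 2) ^ α := by
      rw [← Real.rpow_add hlampos, hlam2, ← Real.rpow_mul hlampos.le]
      have hsplit : 4 * γ + (2 - 2 * m) = e + 2 * α := by rw [he]; ring
      rw [hsplit, Real.rpow_add hlampos]
      apply mul_le_mul_of_nonneg_right _ (Real.rpow_nonneg hlampos.le _)
      exact Real.rpow_le_rpow_of_nonpos (by positivity) hlam he0
    calc (1 + ρ ^ 2) ^ (2 * γ) * lam ^ (2 - 2 * m)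
        ≤ (C₁ * lam ^ 2) ^ (2 * γ) * lam ^ (2 - 2 * m) :=
          mul_le_mul_of_nonneg_right hstep1 (Real.rpow_nonneg hlampos.le _)
      _ = C₁ ^ (2 * γ) * (lam ^ (4 * γ) * lam ^ (2 - 2 * m)) := by
          rw [hstep2]; ring
      _ ≤ C₁ ^ (2 * γ) * (C₂ * (lam ^ 2) ^ α) :=
          mul_le_mul_of_nonneg_left hmain (Real.rpow_nonneg hC₁pos.le _)
      _ = C₁ ^ (2 * γ) * C₂ * (lam ^ 2) ^ α := by ring
  -- combine
  have hfinal : (lam ^ 2) ^ α ≤ (2 * K / c₀) * (f (lam ^ 2) - f (ρ ^ 2)) := by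
    rw [div_mul_eq_mul_div, le_div_iff₀ hc₀pos]
    calc (lam ^ 2) ^ α * c₀ = ((lam ^ 2) ^ α * (c₀ / (2 * K))) * (2 * K) := by
          field_simp
      _ ≤ (f (lam ^ 2) - f (ρ ^ 2)) * (2 * K) :=
          mul_le_mul_of_nonneg_right hkey (by positivity)
      _ = 2 * K * (f (lam ^ 2) - f (ρ ^ 2)) := by ring
  calc (1 + ρ ^ 2) ^ (2 * γ) * lam ^ (2 - 2 * m)
      ≤ C₁ ^ (2 * γ) * C₂ * (lam ^ 2) ^ α := hlhs
    _ ≤ C₁ ^ (2 * γ) * C₂ * ((2 * K / c₀) * (f (lam ^ 2) - f (ρ ^ 2))) :=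
        mul_le_mul_of_nonneg_left hfinal (by positivity)
    _ = C₁ ^ (2 * γ) * C₂ * (2 * K / c₀) * (f (lam ^ 2) - f (ρ ^ 2)) := by ring
end

section
/- Let X be a complex Banach space and let A : X → X and Π : X → X be bounded linear operators with Π ∘ Π = Π, Π ∘ A = 0 and A ∘ Π = 0. Let μ be a nonzero complex number and K > 0, and suppose that ‖x‖ ≤ K·‖Ax + μx‖ for every x ∈ ker Π. Then for every w ∈ X: ‖w‖ ≤ ( K·‖Id − Π‖ + ‖Π‖/|μ| )·‖Aw + μw‖. -/
/-! Write `y = A w + μ w` and split `w = (Id - Π) w + Π w`. From `Π A = 0` we get `Π y = μ Π w`,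
which bounds `Π w`. As `Π` commutes with `A`, the component `(Id - Π) w ∈ ker Π` is mapped by
`A + μ` to `(Id - Π) y`, so the hypothesis on `ker Π` bounds it. -/

namespace ContinuousLinearMap

variable {𝕜 X : Type*} [NontriviallyNormedField 𝕜] [SeminormedAddCommGroup X] [NormedSpace 𝕜 X]
  (A P : X →L[𝕜] X)

theorem norm_apply_le_div_mul_norm_add_smul_of_comp_eq_zero (hPA : P.comp A = 0)
    {μ : 𝕜} (hμ : μ ≠ 0) (w : X) : ‖P w‖ ≤ ‖P‖ / ‖μ‖ * ‖A w + μ • w‖ := by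
  have hPy : P (A w + μ • w) = μ • P w := by
    rw [map_add, map_smul, ← comp_apply, hPA, zero_apply, zero_add]
  rw [div_mul_eq_mul_div, le_div_iff₀ (norm_pos_iff.mpr hμ), mul_comm, ← norm_smul, ← hPy]
  exact P.le_opNorm _

theorem id_sub_apply_mem_ker_of_comp_self (hP : P.comp P = P) (w : X) :
    (ContinuousLinearMap.id 𝕜 X - P) w ∈ LinearMap.ker (P : X →ₗ[𝕜] X) := by
  rw [LinearMap.mem_ker, coe_coe, sub_apply, id_apply, map_sub, ← comp_apply, hP, sub_self]

theorem add_smul_id_sub_apply_of_comp_comm (hAP : A.comp P = P.comp A) (μ : 𝕜) (w : X) :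
    A ((ContinuousLinearMap.id 𝕜 X - P) w) + μ • (ContinuousLinearMap.id 𝕜 X - P) w =
      (ContinuousLinearMap.id 𝕜 X - P) (A w + μ • w) := by
  have hAPw : A (P w) = P (A w) := by rw [← comp_apply, hAP, comp_apply]
  simp only [sub_apply, id_apply, map_sub, map_add, map_smul, hAPw, smul_sub]

end ContinuousLinearMap

theorem riesz_projector_resolvent_transfer_general
    {X : Type*} [NormedAddCommGroup X] [NormedSpace ℂ X]
    (A Pr : X →L[ℂ] X)
    (hPr : Pr.comp Pr = Pr) (hPrA : Pr.comp A = 0) (hAPr : A.comp Pr = 0)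
    (μ : ℂ) (hμ : μ ≠ 0) (K : ℝ) (hK : 0 < K)
    (hres : ∀ x : X, x ∈ LinearMap.ker (Pr : X →ₗ[ℂ] X) → ‖x‖ ≤ K * ‖A x + μ • x‖) :
    ∀ w : X, ‖w‖ ≤ (K * ‖ContinuousLinearMap.id ℂ X - Pr‖ + ‖Pr‖ / ‖μ‖) *
      ‖A w + μ • w‖ := by
  intro w
  set Q := ContinuousLinearMap.id ℂ X - Pr
  set y := A w + μ • w
  have hQw : ‖Q w‖ ≤ K * ‖Q‖ * ‖y‖ :=
    calc ‖Q w‖ ≤ K * ‖A (Q w) + μ • Q w‖ := hres _ (Pr.id_sub_apply_mem_ker_of_comp_self hPr w)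
      _ = K * ‖Q y‖ := by
        rw [A.add_smul_id_sub_apply_of_comp_comm Pr (hAPr.trans hPrA.symm)]
      _ ≤ K * (‖Q‖ * ‖y‖) := mul_le_mul_of_nonneg_left (Q.le_opNorm y) hK.le
      _ = K * ‖Q‖ * ‖y‖ := (mul_assoc _ _ _).symm
  have hPw := A.norm_apply_le_div_mul_norm_add_smul_of_comp_eq_zero Pr hPrA hμ w
  calc ‖w‖ = ‖Q w + Pr w‖ := congrArg norm (sub_add_cancel w (Pr w)).symm
    _ ≤ ‖Q w‖ + ‖Pr w‖ := norm_add_le _ _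
    _ ≤ (K * ‖Q‖ + ‖Pr‖ / ‖μ‖) * ‖y‖ := by rw [add_mul]; exact add_le_add hQw hPw

/-- Resolvent-norm transfer estimate of Lemma 3.10(5) (Step 5e): if
`‖x‖ ≤ K‖Ax + μx‖` for all `x ∈ ker Π`, then for every `w ∈ X`,
`‖w‖ ≤ (K‖Id − Π‖ + ‖Π‖/|μ|)‖Aw + μw‖`. -/
theorem riesz_projector_resolvent_transfer
    {X : Type*} [NormedAddCommGroup X] [NormedSpace ℂ X] [CompleteSpace X]
    (A Pr : X →L[ℂ] X)
    (hPr : Pr.comp Pr = Pr) (hPrA : Pr.comp A = 0) (hAPr : A.comp Pr = 0)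
    (μ : ℂ) (hμ : μ ≠ 0) (K : ℝ) (hK : 0 < K)
    (hres : ∀ x : X, x ∈ LinearMap.ker (Pr : X →ₗ[ℂ] X) → ‖x‖ ≤ K * ‖A x + μ • x‖) :
    ∀ w : X, ‖w‖ ≤ (K * ‖ContinuousLinearMap.id ℂ X - Pr‖ + ‖Pr‖ / ‖μ‖) *
      ‖A w + μ • w‖ :=
  riesz_projector_resolvent_transfer_general A Pr hPr hPrA hAPr μ hμ K hK hres
end
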